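/- arXiv:2003.00540 — 2 statements merged into one kernel-verified Lean document; each statement's English description precedes it below -/
import Mathlib

section
/- Let λ and μ be partitions with μ ⊆ λ and λ_1 = ℓ(λ') ≤ n. For all 1 ≤ i, j ≤ n, ∑_{p ∈ L(i,j)} wt(p) = e_{λ'_j − μ'_i − j + i}(x_1, x_2, …, t_{μ'_i+1}, t_{μ'_i+2}, …, t_{λ'_j−1}). -/
open scoped Classical

namespace GrothJT

/-! ## Partitions -/

/-- A partition: a weakly decreasing sequence of nonnegative integers with finitely many
nonzero terms.  `part i` is the `i`-th part `λ_i` (indices `i ≥ 1` are the relevant ones). -/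
structure Partition where
  part : ℕ → ℕ
  antitone' : ∀ i j : ℕ, i ≤ j → part j ≤ part i
  eventually_zero : ∃ N, ∀ i, N ≤ i → part i = 0

namespace Partition

/-- The conjugate partition: `conj lam j = #{i ≥ 1 : λ_i ≥ j}`. -/
noncomputable def conj (lam : Partition) (j : ℕ) : ℕ :=
  Set.ncard {i : ℕ | 1 ≤ i ∧ j ≤ lam.part i}

/-- The cells of the Young diagram of a partition (row `i`, column `j`, both `≥ 1`). -/
def cells (lam : Partition) : Set (ℕ × ℕ) :=
  {c | 1 ≤ c.1 ∧ 1 ≤ c.2 ∧ c.2 ≤ lam.part c.1}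

/-- `len lam = ℓ(λ)`, the number of nonzero parts. -/
noncomputable def len (lam : Partition) : ℕ := lam.conj 1

/-- The empty partition. -/
protected def zero : Partition :=
  ⟨fun _ => 0, fun _ _ _ => le_rfl, ⟨0, fun _ _ => rfl⟩⟩

/-- `Sub mu lam` means `μ ⊆ λ`. -/
def Sub (mu lam : Partition) : Prop := ∀ i, mu.part i ≤ lam.part i

end Partition

/-- The cells of the skew shape `λ/μ`. -/
def skewCells (lam mu : Partition) : Set (ℕ × ℕ) := lam.cells \ mu.cells

/-! ## Formal power series in the variables `x = (x_1, x_2, …)` and `t = (t_1, t_2, …)` -/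

/-- Variable indices: `Sum.inl i` is the variable `x_i`, and `Sum.inr i` is `t_i`
(only indices `i ≥ 1` are used). -/
abbrev Var := ℕ ⊕ ℕ

abbrev PS := MvPowerSeries Var ℤ

/-- The elementary symmetric function of degree `k` in the set `V` of variables,
as a formal power series: `e_0 = 1` and `e_k = 0` for `k < 0`. -/
noncomputable def eVar (V : Set Var) (k : ℤ) : PS := fun d =>
  if 0 ≤ k ∧ (∀ v, d v ≤ 1) ∧ (∀ v, d v ≠ 0 → v ∈ V) ∧ ((d.sum fun _ m => m : ℕ) : ℤ) = k
  then 1 else 0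

/-- The set of all the variables `x_1, x_2, …`. -/
def xVars : Set Var := {v | ∃ i, 1 ≤ i ∧ v = Sum.inl i}

/-- The set of the variables `t_a, t_{a+1}, …, t_b`. -/
def tRange (a b : ℕ) : Set Var := {v | ∃ i, a ≤ i ∧ i ≤ b ∧ v = Sum.inr i}

/-! ## Reverse plane partitions and refined dual stable Grothendieck polynomials -/

/-- A reverse plane partition of shape `λ/μ`: a filling of the skew shape with positive
integers, weakly increasing along each row and each column (and `0` outside the shape). -/
structure RPP (lam mu : Partition) where
  entry : ℕ × ℕ → ℕ
  pos : ∀ c ∈ skewCells lam mu, 1 ≤ entry c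
  zero_outside : ∀ c, c ∉ skewCells lam mu → entry c = 0
  row_weak : ∀ i j, (i, j) ∈ skewCells lam mu → (i, j + 1) ∈ skewCells lam mu →
    entry (i, j) ≤ entry (i, j + 1)
  col_weak : ∀ i j, (i, j) ∈ skewCells lam mu → (i + 1, j) ∈ skewCells lam mu →
    entry (i, j) ≤ entry (i + 1, j)

/-- The exponent of the weight monomial `wt(R) = ∏ x_i^{a_i(R)} t_i^{b_i(R)}` of an RPP:
`a_i(R)` is the number of columns containing an `i`, and `b_i(R)` is the number of cells
`(i,j)` with `R(i,j) = R(i+1,j)`. -/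
noncomputable def rppExp (lam mu : Partition) (R : RPP lam mu) : Var → ℕ
  | Sum.inl i => Set.ncard {j : ℕ | ∃ r, (r, j) ∈ skewCells lam mu ∧ R.entry (r, j) = i}
  | Sum.inr i => Set.ncard {j : ℕ | (i, j) ∈ skewCells lam mu ∧ (i + 1, j) ∈ skewCells lam mu ∧
      R.entry (i, j) = R.entry (i + 1, j)}

/-- The refined dual stable Grothendieck polynomial
`g̃_{λ/μ}(x;t) = ∑_{R ∈ RPP(λ/μ)} wt(R)`, as a formal power series: the coefficient of a
monomial is the number of RPPs of shape `λ/μ` with that weight. -/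
noncomputable def gt (lam mu : Partition) : PS := fun d =>
  (Set.ncard {R : RPP lam mu | ∀ v, rppExp lam mu R v = d v} : ℤ)

/-- The Jacobi–Trudi matrix whose `(i,j)` entry (1-indexed) is
`e_{λ'_i - μ'_j - i + j}(x_1, x_2, …, t_{μ'_j+1}, …, t_{λ'_i-1})`. -/
noncomputable def JTmat (lam mu : Partition) (n : ℕ) : Matrix (Fin n) (Fin n) PS :=
  Matrix.of fun i j =>
    eVar (xVars ∪ tRange (mu.conj (j.1 + 1) + 1) (lam.conj (i.1 + 1) - 1))
      ((lam.conj (i.1 + 1) : ℤ) - (mu.conj (j.1 + 1) : ℤ) - (i.1 + 1) + (j.1 + 1))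

/-! ## `x`-only versions (dual stable Grothendieck polynomials) -/

/-- The elementary symmetric function `e_k(x_1, x_2, …)` in the variables `x_i`, `i ≥ 1`. -/
noncomputable def eX (k : ℤ) : MvPowerSeries ℕ ℤ := fun d =>
  if 0 ≤ k ∧ (∀ v, d v ≤ 1) ∧ d 0 = 0 ∧ ((d.sum fun _ m => m : ℕ) : ℤ) = k then 1 else 0

/-- The dual stable Grothendieck polynomial `g_{λ/μ}(x) = ∑_{R ∈ RPP(λ/μ)} ∏ x_i^{a_i(R)}`. -/
noncomputable def gx (lam mu : Partition) : MvPowerSeries ℕ ℤ := fun d =>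
  (Set.ncard {R : RPP lam mu |
    ∀ i, Set.ncard {j : ℕ | ∃ r, (r, j) ∈ skewCells lam mu ∧ R.entry (r, j) = i} = d i} : ℤ)

/-- `ibinom m k` is the binomial coefficient `C(m,k)`, with `C(m,k) = δ_{k,0}` for `m < 0`. -/
def ibinom (m : ℤ) (k : ℕ) : ℤ :=
  if m < 0 then (if k = 0 then 1 else 0) else (m.toNat.choose k : ℤ)


/-! ## Lattice paths in `G = ℕ × ℕ_ω` -/

/-- A path in `G = ℕ × ℕ_ω`: a pair of infinite sequences of points whose consecutive
differences are up steps `(0,1)` or diagonal steps `(1,1)`.  Since every step raises the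
height by one, the point at height `m` (resp. `ω + m`) has first coordinate `lo m`
(resp. `hi m`).  Both sequences are eventually constant, and the second one starts at the
limit of the first. -/
structure PathLP where
  lo : ℕ → ℕ
  hi : ℕ → ℕ
  lo_step : ∀ m, lo (m + 1) = lo m ∨ lo (m + 1) = lo m + 1
  hi_step : ∀ m, hi (m + 1) = hi m ∨ hi (m + 1) = hi m + 1
  lo_eventually : ∃ N, ∀ m, N ≤ m → lo m = lo N
  hi_eventually : ∃ N, ∀ m, N ≤ m → hi m = hi N
  link : ∃ N, (∀ m, N ≤ m → lo m = lo N) ∧ hi 0 = lo N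

/-- `PathFromTo p a b`: `p` is a path from `(a, 0)` to `(b, 2ω)`. -/
def PathFromTo (p : PathLP) (a b : ℕ) : Prop :=
  p.lo 0 = a ∧ ∃ N, ∀ m, N ≤ m → p.hi m = b

/-- The exponent of the weight monomial `wt(p) = ∏ x_i^{a_i(p)} t_i^{b_i(p)}` of a path:
`a_i(p)` (resp. `b_i(p)`) is the number of diagonal steps ending at height `i`
(resp. `ω + i`). -/
noncomputable def pathExp (p : PathLP) : Var → ℕ
  | Sum.inl i => if 1 ≤ i ∧ p.lo i = p.lo (i - 1) + 1 then 1 else 0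
  | Sum.inr i => if 1 ≤ i ∧ p.hi i = p.hi (i - 1) + 1 then 1 else 0

/-- `L(i,j)`: the set of paths from `(μ'_i + n - i, 0)` to `(λ'_j + n - j, 2ω)` with no
diagonal step ending at a height in `{ω+1, …, ω+μ'_i}` nor at a height above
`ω + λ'_j - 1`. -/
def Lij (lam mu : Partition) (n i j : ℕ) : Set PathLP :=
  {p | PathFromTo p (mu.conj i + n - i) (lam.conj j + n - j) ∧
    (∀ m, 1 ≤ m → m ≤ mu.conj i → p.hi m = p.hi (m - 1)) ∧
    (∀ m, 1 ≤ m → lam.conj j ≤ m → p.hi m = p.hi (m - 1))}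

/-- An `n`-path. -/
abbrev NPath (n : ℕ) := Fin n → PathLP

/-- `InL lam mu n π p` : the `n`-path `p` lies in `L(π)`,
i.e. `p_i ∈ L(i, π(i))` for all `i` (1-indexed). -/
def InL (lam mu : Partition) (n : ℕ) (π : Equiv.Perm (Fin n)) (p : NPath n) : Prop :=
  ∀ i : Fin n, p i ∈ Lij lam mu n (i.1 + 1) ((π i).1 + 1)

/-- Two paths have a common point. -/
def Crossing (p q : PathLP) : Prop := (∃ m, p.lo m = q.lo m) ∨ (∃ m, p.hi m = q.hi m)

/-- An `n`-path is noncrossing if no two of its paths share a point. -/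
def IsNC (n : ℕ) (p : NPath n) : Prop := ∀ i j : Fin n, i ≠ j → ¬ Crossing (p i) (p j)

/-! ## The blocks `D_k` -/

/-- The set of distinct nonzero parts of `μ`. -/
def partsSet (mu : Partition) : Set ℕ := {v | 1 ≤ v ∧ ∃ i, 1 ≤ i ∧ mu.part i = v}

/-- `r`, the number of distinct nonzero parts of `μ`. -/
noncomputable def rDist (mu : Partition) : ℕ := (partsSet mu).ncard

/-- `dSeq mu n 0 = d_0 = n`, and for `1 ≤ k ≤ r`, `dSeq mu n k = d_k` is the `k`-th largest
distinct nonzero part of `μ`; for `k > r` it is `0` (in particular `d_{r+1} = 0`). -/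
noncomputable def dSeq (mu : Partition) (n : ℕ) : ℕ → ℕ
  | 0 => n
  | (k + 1) => sSup {v | v ∈ partsSet mu ∧ Set.ncard {w ∈ partsSet mu | v ≤ w} = k + 1}

/-- The block `D_k = {d_k + 1, …, d_{k-1}}` of column indices. -/
def Dblock (mu : Partition) (n k : ℕ) : Set ℕ :=
  {j | dSeq mu n k < j ∧ j ≤ dSeq mu n (k - 1)}

/-- An `n`-path is semi-noncrossing if `p_i` and `p_j` have no common point whenever
`i ≠ j` both lie in some `D_k` with `1 ≤ k ≤ r`. -/
def IsSNC (mu : Partition) (n : ℕ) (p : NPath n) : Prop :=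
  ∀ k, 1 ≤ k → k ≤ rDist mu →
    ∀ i j : Fin n, i ≠ j → (i.1 + 1) ∈ Dblock mu n k → (j.1 + 1) ∈ Dblock mu n k →
      ¬ Crossing (p i) (p j)

/-- The set of semi-noncrossing `n`-paths in `L`. -/
def SNCset (lam mu : Partition) (n : ℕ) : Set (NPath n) :=
  {p | (∃ π, InL lam mu n π p) ∧ IsSNC mu n p}

/-- The (unsigned) weight exponent of an `n`-path: `wt(p_1) ⋯ wt(p_n)`. -/
noncomputable def npathExp (n : ℕ) (p : NPath n) : Var → ℕ :=
  fun v => ∑ i : Fin n, pathExp (p i) v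

/-- The signed sum `∑_{p ∈ L^SNC} wt(p)` of the weights of all semi-noncrossing `n`-paths,
as a formal power series: the coefficient of a monomial is `∑_π sign(π) · #{p ∈ L^SNC(π)}`
with the given weight (the type of an `n`-path in `L` is unique). -/
noncomputable def sncSum (lam mu : Partition) (n : ℕ) : PS := fun d =>
  ∑ π : Equiv.Perm (Fin n),
    ((Equiv.Perm.sign π : ℤˣ) : ℤ) *
      (Set.ncard {p : NPath n | InL lam mu n π p ∧ IsSNC mu n p ∧
        ∀ v, npathExp n p v = d v} : ℤ)

/-- The sum `∑_{p ∈ L(i,j)} wt(p)` as a formal power series. -/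
noncomputable def LijSum (lam mu : Partition) (n i j : ℕ) : PS := fun d =>
  (Set.ncard {p ∈ Lij lam mu n i j | ∀ v, pathExp p v = d v} : ℤ)


/-! ## Extended integers and tableaux -/

/-- Extended integers `{1̄ < 2̄ < ⋯ < 1 < 2 < ⋯ < 1* < 2* < ⋯}`:
`bar i` is the negative entry `ī`, `pl i` is the ordinary entry `i`, and `st i` is the
`ω`-entry `i*`. -/
abbrev Ext := Lex (ℕ ⊕ Lex (ℕ ⊕ ℕ))

def bar (i : ℕ) : Ext := toLex (Sum.inl i)
def pl (i : ℕ) : Ext := toLex (Sum.inr (toLex (Sum.inl i)))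
def st (i : ℕ) : Ext := toLex (Sum.inr (toLex (Sum.inr i)))

/-- A tableau: a partial filling of `ℤ⁺ × ℤ⁺` (as a subset of `ℕ × ℕ`) with extended
integers; `none` means the cell is absent. -/
abbrev Tb := ℕ × ℕ → Option Ext

/-- The `k`-th smallest element of a set of extended integers (1-indexed); `none` if there
is no element `e` with exactly `k` elements `≤ e` in the set. -/
noncomputable def nthSmall (S : Set Ext) (k : ℕ) : Option Ext :=
  if h : ∃ e, e ∈ S ∧ Set.ncard {e' ∈ S | e' ≤ e} = k then some h.choose else none

/-- The set of labels of the diagonal steps of a path: a diagonal step ending at height `m`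
is recorded as `pl m`, and one ending at height `ω + m` as `st m`. -/
def labelSet (p : PathLP) : Set Ext :=
  {e | ∃ m, 1 ≤ m ∧ ((p.lo m = p.lo (m - 1) + 1 ∧ e = pl m) ∨
    (p.hi m = p.hi (m - 1) + 1 ∧ e = st m))}

/-- The map `Tab` sending an `n`-path to a tableau: for each `i` and `k ≥ 1`, the cell
`(α_i + k, i)` contains the ending height of the `k`-th diagonal step of `p_i`. -/
noncomputable def TabU (alpha : ℕ → ℕ) (n : ℕ) (p : NPath n) : Tb := fun c =>
  if h : 1 ≤ c.2 ∧ c.2 ≤ n ∧ alpha c.2 < c.1 then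
    nthSmall (labelSet (p ⟨c.2 - 1, by omega⟩)) (c.1 - alpha c.2)
  else none

/-! ## Vertical tableaux -/

/-- A vertical tableau with cell set `S`: entries from `{1 < 2 < ⋯ < 1* < 2* < ⋯}`,
strictly increasing down each column, with support exactly `S`. -/
def IsVTsh (S : Set (ℕ × ℕ)) (T : Tb) : Prop :=
  (∀ c, (T c).isSome ↔ c ∈ S) ∧
  (∀ c e, T c = some e → ∃ a, 1 ≤ a ∧ (e = pl a ∨ e = st a)) ∧
  (∀ i j e₁ e₂, T (i, j) = some e₁ → T (i + 1, j) = some e₂ → e₁ < e₂)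

/-- The cells of the vertical diagram `V(β)/V(α)` (columns `1 ≤ j ≤ n`). -/
def VTcells (alpha beta : ℕ → ℕ) (n : ℕ) : Set (ℕ × ℕ) :=
  {c | 1 ≤ c.2 ∧ c.2 ≤ n ∧ alpha c.2 < c.1 ∧ c.1 ≤ beta c.2}

/-- `L(α,β)`: the set of `n`-paths `(p_1, …, p_n)` where `p_i` is a path from
`(α_i + n - i, 0)` to `(β_i + n - i, 2ω)`. -/
def Lab (alpha beta : ℕ → ℕ) (n : ℕ) : Set (NPath n) :=
  {p | ∀ i : Fin n, PathFromTo (p i) (alpha (i.1 + 1) + n - (i.1 + 1))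
    (beta (i.1 + 1) + n - (i.1 + 1))}

/-- The cells of the vertical diagram `π(λ)`: column `j` (for `1 ≤ j ≤ n`) has the cells
`(i, j)` with `1 ≤ i ≤ λ'_{π(j)} - π(j) + j`. -/
def permLamCells (lam : Partition) (n : ℕ) (π : Equiv.Perm (Fin n)) : Set (ℕ × ℕ) :=
  {c | ∃ h : 1 ≤ c.2 ∧ c.2 ≤ n, 1 ≤ c.1 ∧
    (c.1 : ℤ) ≤ (lam.conj ((π ⟨c.2 - 1, by omega⟩).1 + 1) : ℤ) -
      ((π ⟨c.2 - 1, by omega⟩).1 + 1) + c.2}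

/-- The cells of the vertical diagram `V(μ')` of `μ` (columns `1 ≤ j ≤ n`). -/
def muVertCells (mu : Partition) (n : ℕ) : Set (ℕ × ℕ) :=
  {c | 1 ≤ c.2 ∧ c.2 ≤ n ∧ 1 ≤ c.1 ∧ c.1 ≤ mu.conj c.2}

/-! ## RSE-tableaux (in the unified extended-integer form) -/

/-- An RSE-tableau of shape `λ` and level `k`, with the entries of `R` taken from
`{1̄ < 2̄ < ⋯ < 1 < 2 < ⋯}` (the set `oRSE_k(λ)`), viewed as a single tableau of shape `λ`
over the extended integers (entries `a` of the elegant tableau `E` written as `a*`):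
the support is the Young diagram of `λ`; rows and columns weakly increase; there are no
`ω`-entries in rows `≤ k`; an `ω`-entry `a*` in row `i` satisfies `k ≤ a` and
`1 ≤ a ≤ i - 1` (`E` is elegant with entries `≥ k`); `ω`-entries strictly increase down
columns (`E` is an SSYT); and non-`ω`-entries strictly increase down columns within rows
`≥ k` (rows `≥ k` of `R` form an SSYT). -/
def IsORSE (lam : Partition) (k : ℕ) (T : Tb) : Prop :=
  (∀ c, (T c).isSome ↔ c ∈ lam.cells) ∧
  (∀ c a, T c = some (bar a) → 1 ≤ a) ∧
  (∀ c a, T c = some (pl a) → 1 ≤ a) ∧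
  (∀ i j e₁ e₂, T (i, j) = some e₁ → T (i, j + 1) = some e₂ → e₁ ≤ e₂) ∧
  (∀ i j e₁ e₂, T (i, j) = some e₁ → T (i + 1, j) = some e₂ → e₁ ≤ e₂) ∧
  (∀ i j a, T (i, j) = some (st a) → k < i) ∧
  (∀ i j a, T (i, j) = some (st a) → k ≤ a ∧ 1 ≤ a ∧ a + 1 ≤ i) ∧
  (∀ i j a b, T (i, j) = some (st a) → T (i + 1, j) = some (st b) → a < b) ∧
  (∀ i j e₁ e₂, k ≤ i → T (i, j) = some e₁ → (¬ ∃ a, e₁ = st a) →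
    T (i + 1, j) = some e₂ → (¬ ∃ a, e₂ = st a) → e₁ < e₂)

/-- A skew RSE-tableau of shape `λ/μ` and level `k`, viewed (via the identification filling
every cell of row `i` of `μ` with `ī`) as a tableau of shape `λ` over the extended
integers: an element of `oRSE_k(λ)` whose negative entries are exactly `ī` on row `i` of
`μ`, and whose `ω`-entries `a*` in column `j` moreover satisfy `μ'_j + 1 ≤ a`
(`E` is `μ`-elegant). -/
def IsSkewRSE (lam mu : Partition) (k : ℕ) (T : Tb) : Prop :=
  IsORSE lam k T ∧
  (∀ i j, (i, j) ∈ mu.cells → T (i, j) = some (bar i)) ∧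
  (∀ i j a, T (i, j) = some (bar a) → (i, j) ∈ mu.cells) ∧
  (∀ i j a, T (i, j) = some (st a) → mu.conj j + 1 ≤ a)

/-- `RSE_k(λ/μ)` as a set of tableaux. -/
def RSEset (lam mu : Partition) (k : ℕ) : Set Tb := {T | IsSkewRSE lam mu k T}

/-- The weight exponent of an RSE-tableau `T = (R, E)`:
`wt(T) = wt(R) · t_E = ∏ x_i^{a_i(R)} t_i^{b_i(R) + c_i(E)}`. -/
noncomputable def rseWtExp (T : Tb) : Var → ℕ
  | Sum.inl i => Set.ncard {j : ℕ | ∃ r, T (r, j) = some (pl i)}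
  | Sum.inr i => Set.ncard {j : ℕ | ∃ a, T (i, j) = some (pl a) ∧ T (i + 1, j) = some (pl a)}
      + Set.ncard {c : ℕ × ℕ | T c = some (st i)}

/-- `∑_{T ∈ RSE_k(λ/μ)} wt(T)` as a formal power series. -/
noncomputable def rseSum (lam mu : Partition) (k : ℕ) : PS := fun d =>
  (Set.ncard {T ∈ RSEset lam mu k | ∀ v, rseWtExp T v = d v} : ℤ)

/-- `∑_{T ∈ S} wt(T)` for a set `S` of RSE-tableaux, as a formal power series. -/
noncomputable def rseImageSum (S : Set Tb) : PS := fun d =>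
  (Set.ncard {T ∈ S | ∀ v, rseWtExp T v = d v} : ℤ)

/-- Fill the cells of `μ` with the negative entries `ī` (the identification of a
skew tableau of shape `λ/μ` with a tableau of shape `λ` over the extended integers). -/
noncomputable def addBars (mu : Partition) (T : Tb) : Tb := fun c =>
  if c ∈ mu.cells then some (bar c.1) else T c


/-! ## The Lam–Pylyavskyy maps `π↑` and `π↓` -/

/-- Update a tableau at one cell. -/
def upd (T : Tb) (c : ℕ × ℕ) (e : Option Ext) : Tb := fun c' => if c' = c then e else T c'

/-- The `R`-part of an RSE-tableau (the non-`ω`-entries). -/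
noncomputable def Rpart (T : Tb) : Tb := fun c =>
  (T c).bind fun e => if ∃ a, e = st a then none else some e

/-- The `E`-part of an RSE-tableau (the `ω`-entries). -/
noncomputable def Spart (T : Tb) : Tb := fun c =>
  (T c).bind fun e => if ∃ a, e = st a then some e else none

/-- The column where a non-bumping RSK insertion into row `i` places its entry:
one past the last filled cell of row `i`; if row `i` is empty, aligned with the first
filled cell of row `i - 1`. -/
noncomputable def placeCol (S : Tb) (i : ℕ) : ℕ :=
  if ∃ j, (S (i, j)).isSome then sSup {j | (S (i, j)).isSome} + 1
  else if ∃ j, (S (i - 1, j)).isSome then sInf {j | (S (i - 1, j)).isSome}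
  else 1

/-- RSK row insertion of the entry `a` into the rows `≥ i` of the tableau `S` (with fuel):
in row `i`, the leftmost entry strictly greater than `a` is replaced by `a` and bumped into
the next row; if there is no such entry, `a` is placed at the end of row `i`. -/
noncomputable def insIn : ℕ → Tb → ℕ → Ext → Tb
  | 0, S, _, _ => S
  | (F + 1), S, i, a =>
    if hb : ∃ j, 1 ≤ j ∧ ∃ b, S (i, j) = some b ∧ a < b then
      match S (i, Nat.find hb) with
      | some b => insIn F (upd S (i, Nat.find hb) (some a)) (i + 1) b
      | none => S
    else upd S (i, placeCol S i) (some a)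

/-- The level-decreasing map `π↑` from level `k + 1` to level `k` (with all bounds given by
`N`): the entry `R(k,j)` is novel if `R(k,j) ≠ R(k+1,j)` (in particular if the cell
`(k+1,j)` is absent); row `k` of `R` is deleted and the rows `≥ k + 1` are shifted up by
one; the novel entries are RSK-inserted, in weakly increasing order (= increasing column
order), into the rows `≥ k`; the cells of the horizontal strip `sh(R)/sh(R')` left empty
are added to `E` filled with `k` (i.e. with `k*`). -/
noncomputable def piUp (N k : ℕ) (T : Tb) : Tb :=
  let R := Rpart T
  let R1 : Tb := fun c => if c.1 < k then R c else R (c.1 + 1, c.2)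
  let cols := (List.range (N + 1)).filter fun j =>
    decide (1 ≤ j ∧ (R (k, j)).isSome ∧ R (k, j) ≠ R (k + 1, j))
  let R2 := cols.foldl (fun S j =>
    match R (k, j) with
    | some a => insIn N S k a
    | none => S) R1
  fun c =>
    match R2 c with
    | some e => some e
    | none =>
      match Spart T c with
      | some e => some e
      | none => if (R c).isSome then some (st k) else none

/-- `piUpPow N k` is the `k`-fold application `π↑^k` starting from level `k + 1`,
i.e. `π↑ (level k+1 → k)` first, then down to level `1`. -/
noncomputable def piUpPow (N : ℕ) : ℕ → Tb → Tb
  | 0 => id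
  | (k + 1) => fun T => piUpPow N k (piUp N (k + 1) T)

/-- Reverse RSK row insertion of the value `v` into row `i` (with fuel), continuing upward
until a value is bumped out of row `k`: in row `i` the rightmost entry `a < v` is replaced
by `v`, and `a` is carried to row `i - 1`; the result is the updated tableau together with
the column and the value bumped out of row `k`. -/
noncomputable def revIns : ℕ → ℕ → ℕ → Tb → Ext → Tb × ℕ × Ext
  | 0, _, _, S, v => (S, 0, v)
  | (F + 1), k, i, S, v =>
    let j0 := sSup {j | ∃ a, S (i, j) = some a ∧ a < v}
    match S (i, j0) with
    | some a =>
      if a < v then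
        if i ≤ k then (upd S (i, j0) (some v), j0, a)
        else revIns F k (i - 1) (upd S (i, j0) (some v)) a
      else (S, 0, v)
    | none => (S, 0, v)

/-- Start the reverse RSK algorithm on the rows `≥ k` of `S` from the last (bottom) cell of
column `c`: that cell is removed and its value is reverse-inserted into the row above. -/
noncomputable def revStart (F k : ℕ) (S : Tb) (c : ℕ) : Tb × ℕ × Ext :=
  let i0 := sSup {i | k ≤ i ∧ (S (i, c)).isSome}
  match S (i0, c) with
  | some v =>
    if i0 ≤ k then (upd S (i0, c) none, c, v)
    else revIns F k (i0 - 1) (upd S (i0, c) none) v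
  | none => (S, 0, pl 0)

/-- The level-increasing map `π↓` from level `k` to level `k + 1` (with all bounds given by
`N`): for each column `c` (rightmost first) of `rows ≥ k` of `R` whose column of `E`
contains no `k`, the reverse RSK algorithm is applied starting from the last cell of column
`c`, bumping a value `a_i` out of row `k` at some column `b_i`; then the rows `≥ k` are
shifted down by one, and row `k` is refilled: `a_i` at column `b_i`, and the entry directly
below in every other (originally filled) column; all entries `k` of `E` are removed. -/
noncomputable def piDown (N k : ℕ) (T : Tb) : Tb :=
  let R := Rpart T
  let cols := (List.range (N + 1)).filter fun j =>
    decide (1 ≤ j ∧ (∃ i, k ≤ i ∧ (R (i, j)).isSome) ∧ ¬ ∃ i, T (i, j) = some (st k))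
  let step : ℕ → Tb × (ℕ → Option Ext) → Tb × (ℕ → Option Ext) := fun c SO =>
    let res := revStart N k SO.1 c
    (res.1, fun j => if j = res.2.1 then some res.2.2 else SO.2 j)
  let RO := cols.foldr step (R, fun _ => none)
  let R2 : Tb := fun c =>
    if c.1 < k then RO.1 c
    else if c.1 = k then
      (if (RO.2 c.2).isSome then RO.2 c.2
       else if (R (k, c.2)).isSome then RO.1 (k, c.2) else none)
    else RO.1 (c.1 - 1, c.2)
  fun c =>
    match R2 c with
    | some e => some e
    | none =>
      match T c with
      | some e => if ∃ a, e = st a ∧ a ≠ k then some e else none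
      | none => none

/-! ## Column restrictions and concatenation -/

/-- The restriction `col_{≤ s}` of a tableau to its columns `1, …, s`. -/
def colLE (s : ℕ) (T : Tb) : Tb := fun c => if c.2 ≤ s then T c else none

/-- The restriction `col_{≥ s}` of a tableau to its columns `s, s + 1, …`. -/
def colGE (s : ℕ) (T : Tb) : Tb := fun c => if s ≤ c.2 then T c else none

/-- Concatenation `T₁ ⊔ T₂` of tableaux (with disjoint column supports, kept at their
absolute positions). -/
def hcat (T₁ T₂ : Tb) : Tb := fun c => (T₁ c).orElse fun _ => T₂ c

/-- A reverse plane partition over the extended integers: entries weakly increase along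
rows and columns. -/
def IsRPPE (T : Tb) : Prop :=
  (∀ i j e₁ e₂, T (i, j) = some e₁ → T (i, j + 1) = some e₂ → e₁ ≤ e₂) ∧
  (∀ i j e₁ e₂, T (i, j) = some e₁ → T (i + 1, j) = some e₂ → e₁ ≤ e₂)

/-- `T₁ ≤ T₂` means the concatenation `T₁ ⊔ T₂` is an RPP over the extended integers. -/
def leTab (T₁ T₂ : Tb) : Prop := IsRPPE (hcat T₁ T₂)

/-- A bound large enough for all bumping processes inside the shape `λ`. -/
noncomputable def Nbound (lam : Partition) : ℕ := lam.part 1 + lam.len + 2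

/-!
A path is determined by its starting point and its weight: the first sequence climbs by the
`x`-exponents, and the second, which starts where the first one ends, by the `t`-exponents.
Hence `wt(p)` is a squarefree monomial of degree `b - a`, and conversely every squarefree monomial
in `x_1, x_2, …, t_1, t_2, …` of degree `b - a` is the weight of exactly one path from `(a, 0)` to
`(b, 2ω)`. The conditions defining `L(i,j)` say precisely that no `t_m` with `m ≤ μ'_i` or
`m ≥ λ'_j` divides the weight.
-/

open Finset

namespace PathLP

attribute [ext] PathLP

theorem pathExp_le_one (p : PathLP) (v : Var) : pathExp p v ≤ 1 := by
  rcases v with m | m <;> simp only [pathExp] <;> split <;> omega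

@[simp]
theorem pathExp_inl_zero (p : PathLP) : pathExp p (Sum.inl 0) = 0 := by simp [pathExp]

@[simp]
theorem pathExp_inr_zero (p : PathLP) : pathExp p (Sum.inr 0) = 0 := by simp [pathExp]

theorem lo_succ (p : PathLP) (m : ℕ) : p.lo (m + 1) = p.lo m + pathExp p (Sum.inl (m + 1)) := by
  simp only [pathExp, Nat.add_sub_cancel]
  rcases p.lo_step m with h | h <;> split_ifs <;> omega

theorem hi_succ (p : PathLP) (m : ℕ) : p.hi (m + 1) = p.hi m + pathExp p (Sum.inr (m + 1)) := by
  simp only [pathExp, Nat.add_sub_cancel]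
  rcases p.hi_step m with h | h <;> split_ifs <;> omega

theorem lo_eq_add_sum (p : PathLP) (m : ℕ) :
    p.lo m = p.lo 0 + ∑ k ∈ Ioc 0 m, pathExp p (Sum.inl k) := by
  induction m with
  | zero => simp
  | succ m ih => rw [lo_succ, ih, sum_Ioc_succ_top (Nat.zero_le m), add_assoc]

theorem hi_eq_add_sum (p : PathLP) (m : ℕ) :
    p.hi m = p.hi 0 + ∑ k ∈ Ioc 0 m, pathExp p (Sum.inr k) := by
  induction m with
  | zero => simp
  | succ m ih => rw [hi_succ, ih, sum_Ioc_succ_top (Nat.zero_le m), add_assoc]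

theorem exists_stable (p : PathLP) : ∃ N, ∀ m, N ≤ m → p.lo m = p.hi 0 ∧ p.hi m = p.hi N := by
  obtain ⟨N₁, hN₁, hlink⟩ := p.link
  obtain ⟨N₂, hN₂⟩ := p.hi_eventually
  refine ⟨max N₁ N₂, fun m hm => ⟨(hN₁ m (le_of_max_le_left hm)).trans hlink.symm, ?_⟩⟩
  rw [hN₂ m (le_of_max_le_right hm), hN₂ _ (le_max_right _ _)]

theorem eq_of_pathExp_eq {p q : PathLP} (h0 : p.lo 0 = q.lo 0) (h : pathExp p = pathExp q) :
    p = q := by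
  have hlo : p.lo = q.lo := funext fun m => by rw [lo_eq_add_sum, q.lo_eq_add_sum, h0, h]
  obtain ⟨N, hN⟩ := p.exists_stable
  obtain ⟨N', hN'⟩ := q.exists_stable
  have hhi0 : p.hi 0 = q.hi 0 := by
    rw [← (hN (max N N') (le_max_left _ _)).1, ← (hN' (max N N') (le_max_right _ _)).1, hlo]
  exact PathLP.ext hlo (funext fun m => by rw [hi_eq_add_sum, q.hi_eq_add_sum, hhi0, h])

theorem hi_eq_hi_pred_iff (p : PathLP) {m : ℕ} (hm : 1 ≤ m) :
    p.hi m = p.hi (m - 1) ↔ pathExp p (Sum.inr m) = 0 := by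
  obtain ⟨k, rfl⟩ := Nat.exists_eq_add_of_le' hm
  rw [Nat.add_sub_cancel, p.hi_succ k]
  omega

theorem hi_flat_iff (p : PathLP) (s t : ℕ) :
    ((∀ m, 1 ≤ m → m ≤ s → p.hi m = p.hi (m - 1)) ∧
        (∀ m, 1 ≤ m → t ≤ m → p.hi m = p.hi (m - 1))) ↔
      ∀ v, pathExp p v ≠ 0 → v ∈ xVars ∪ tRange (s + 1) (t - 1) := by
  constructor
  · rintro ⟨hs, ht⟩ (m | m) hv
    · exact Or.inl ⟨m, Nat.pos_of_ne_zero (by rintro rfl; simp at hv), rfl⟩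
    · have hm : 1 ≤ m := Nat.pos_of_ne_zero (by rintro rfl; simp at hv)
      rw [Ne, ← p.hi_eq_hi_pred_iff hm] at hv
      exact Or.inr ⟨m, by_contra fun h => hv (hs m hm (by omega)),
        by_contra fun h => hv (ht m hm (by omega)), rfl⟩
  · intro h
    refine ⟨fun m hm hms => ?_, fun m hm hmt => ?_⟩ <;>
    · rw [p.hi_eq_hi_pred_iff hm]
      by_contra hv
      obtain ⟨k, -, hk⟩ | ⟨k, hsk, hkt, hk⟩ := h _ hv
      · cases hk
      · cases hk
        omega

end PathLP

theorem degree_eq_sum_Ioc {d : Var →₀ ℕ} {N : ℕ}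
    (hN : d.support ⊆ (Ioc 0 N).disjSum (Ioc 0 N)) :
    d.sum (fun _ m => m) = ∑ k ∈ Ioc 0 N, d (Sum.inl k) + ∑ k ∈ Ioc 0 N, d (Sum.inr k) := by
  rw [Finsupp.sum_of_support_subset d hN _ (fun _ _ => rfl), sum_disjSum]

theorem exists_support_subset_Ioc {d : Var →₀ ℕ} (h0 : d (Sum.inl 0) = 0)
    (h0' : d (Sum.inr 0) = 0) : ∃ N, d.support ⊆ (Ioc 0 N).disjSum (Ioc 0 N) := by
  refine ⟨d.support.sup (Sum.elim id id), fun v hv => ?_⟩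
  have hle : Sum.elim id id v ≤ _ := le_sup hv
  rw [Finsupp.mem_support_iff] at hv
  rcases v with m | m
  · rw [inl_mem_disjSum, mem_Ioc]
    exact ⟨Nat.pos_of_ne_zero (by rintro rfl; exact hv h0), hle⟩
  · rw [inr_mem_disjSum, mem_Ioc]
    exact ⟨Nat.pos_of_ne_zero (by rintro rfl; exact hv h0'), hle⟩

theorem apply_inl_eq_zero {d : Var →₀ ℕ} {N k : ℕ}
    (hN : d.support ⊆ (Ioc 0 N).disjSum (Ioc 0 N)) (hk : k ∉ Ioc 0 N) : d (Sum.inl k) = 0 :=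
  Finsupp.notMem_support_iff.mp fun h => hk (inl_mem_disjSum.mp (hN h))

theorem apply_inr_eq_zero {d : Var →₀ ℕ} {N k : ℕ}
    (hN : d.support ⊆ (Ioc 0 N).disjSum (Ioc 0 N)) (hk : k ∉ Ioc 0 N) : d (Sum.inr k) = 0 :=
  Finsupp.notMem_support_iff.mp fun h => hk (inr_mem_disjSum.mp (hN h))

theorem sum_Ioc_eq_of_le {M : Type*} [AddCommMonoid M] {f : ℕ → M} {N m : ℕ}
    (hf : ∀ k, N < k → f k = 0) (hm : N ≤ m) : ∑ k ∈ Ioc 0 m, f k = ∑ k ∈ Ioc 0 N, f k := by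
  rw [← sum_Ioc_consecutive f (Nat.zero_le N) hm,
    sum_eq_zero fun k hk => hf k (mem_Ioc.mp hk).1, add_zero]

namespace PathLP

theorem support_pathExp_subset {p : PathLP} {d : Var →₀ ℕ} (hd : pathExp p = d) {N : ℕ}
    (hN : ∀ m, N ≤ m → p.lo m = p.hi 0 ∧ p.hi m = p.hi N) :
    d.support ⊆ (Ioc 0 N).disjSum (Ioc 0 N) := by
  intro v hv
  rw [Finsupp.mem_support_iff, ← hd] at hv
  rcases v with m | m
  · obtain ⟨k, rfl⟩ : ∃ k, m = k + 1 := Nat.exists_eq_succ_of_ne_zero (by rintro rfl; simp at hv)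
    rw [inl_mem_disjSum, mem_Ioc]
    by_contra hk
    have := p.lo_succ k
    have := hN k (by omega)
    have := hN (k + 1) (by omega)
    omega
  · obtain ⟨k, rfl⟩ : ∃ k, m = k + 1 := Nat.exists_eq_succ_of_ne_zero (by rintro rfl; simp at hv)
    rw [inr_mem_disjSum, mem_Ioc]
    by_contra hk
    have := p.hi_succ k
    have := hN k (by omega)
    have := hN (k + 1) (by omega)
    omega

end PathLP

theorem PathFromTo.add_degree_eq {p : PathLP} {a b : ℕ} (hp : PathFromTo p a b)
    {d : Var →₀ ℕ} (hd : pathExp p = d) : a + d.sum (fun _ m => m) = b := by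
  obtain ⟨rfl, M, hM⟩ := hp
  obtain ⟨N, hN⟩ := p.exists_stable
  have hb : p.hi N = b := by rw [← (hN _ (le_max_left N M)).2, hM _ (le_max_right N M)]
  have hlo := p.lo_eq_add_sum N
  have hhi := p.hi_eq_add_sum N
  rw [degree_eq_sum_Ioc (PathLP.support_pathExp_subset hd hN), ← hd]
  have hlink := (hN N le_rfl).1
  omega

namespace PathLP

noncomputable def ofExp (a N : ℕ) (d : Var →₀ ℕ) (hd : ∀ v, d v ≤ 1)
    (hN : d.support ⊆ (Ioc 0 N).disjSum (Ioc 0 N)) : PathLP where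
  lo m := a + ∑ k ∈ Ioc 0 m, d (Sum.inl k)
  hi m := a + ∑ k ∈ Ioc 0 N, d (Sum.inl k) + ∑ k ∈ Ioc 0 m, d (Sum.inr k)
  lo_step m := by
    have := hd (Sum.inl (m + 1))
    rw [sum_Ioc_succ_top (Nat.zero_le m)]
    omega
  hi_step m := by
    have := hd (Sum.inr (m + 1))
    rw [sum_Ioc_succ_top (Nat.zero_le m)]
    omega
  lo_eventually := ⟨N, fun m hm => by
    rw [sum_Ioc_eq_of_le (fun k hk => apply_inl_eq_zero hN (by rw [mem_Ioc]; omega)) hm]⟩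
  hi_eventually := ⟨N, fun m hm => by
    rw [sum_Ioc_eq_of_le (fun k hk => apply_inr_eq_zero hN (by rw [mem_Ioc]; omega)) hm]⟩
  link := ⟨N, fun m hm => by
    rw [sum_Ioc_eq_of_le (fun k hk => apply_inl_eq_zero hN (by rw [mem_Ioc]; omega)) hm], by simp⟩

theorem pathExp_ofExp {a N : ℕ} {d : Var →₀ ℕ} (hd : ∀ v, d v ≤ 1)
    (hN : d.support ⊆ (Ioc 0 N).disjSum (Ioc 0 N)) : pathExp (ofExp a N d hd hN) = d := by
  funext v
  rcases v with (_ | m) | (_ | m)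
  · rw [pathExp_inl_zero, apply_inl_eq_zero hN (by simp)]
  · have := hd (Sum.inl (m + 1))
    simp only [pathExp, ofExp, Nat.add_sub_cancel, sum_Ioc_succ_top (Nat.zero_le m)]
    split_ifs <;> omega
  · rw [pathExp_inr_zero, apply_inr_eq_zero hN (by simp)]
  · have := hd (Sum.inr (m + 1))
    simp only [pathExp, ofExp, Nat.add_sub_cancel, sum_Ioc_succ_top (Nat.zero_le m)]
    split_ifs <;> omega

theorem pathFromTo_ofExp (a N : ℕ) (d : Var →₀ ℕ) (hd : ∀ v, d v ≤ 1)
    (hN : d.support ⊆ (Ioc 0 N).disjSum (Ioc 0 N)) :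
    PathFromTo (ofExp a N d hd hN) a (a + d.sum fun _ m => m) := by
  refine ⟨by simp [ofExp], N, fun m hm => ?_⟩
  show a + _ + _ = _
  rw [sum_Ioc_eq_of_le (fun k hk => apply_inr_eq_zero hN (by rw [mem_Ioc]; omega)) hm,
    degree_eq_sum_Ioc hN, add_assoc]

end PathLP

def pathsWithExp (a b : ℕ) (V : Set Var) (d : Var →₀ ℕ) : Set PathLP :=
  {p | PathFromTo p a b ∧ (∀ v, pathExp p v ≠ 0 → v ∈ V) ∧ ∀ v, pathExp p v = d v}

theorem exists_pathsWithExp_eq_singleton {a b : ℕ} {V : Set Var} (hV : Sum.inl 0 ∉ V)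
    (hV' : Sum.inr 0 ∉ V) {d : Var →₀ ℕ} (hle : ∀ v, d v ≤ 1) (hsupp : ∀ v, d v ≠ 0 → v ∈ V)
    (hdeg : a + (d.sum fun _ m => m) = b) : ∃ p, pathsWithExp a b V d = {p} := by
  obtain ⟨N, hN⟩ := exists_support_subset_Ioc (d := d)
    (by_contra fun h => hV (hsupp _ h)) (by_contra fun h => hV' (hsupp _ h))
  have hexp := PathLP.pathExp_ofExp (a := a) hle hN
  refine ⟨PathLP.ofExp a N d hle hN, Set.eq_singleton_iff_unique_mem.mpr ⟨?_, ?_⟩⟩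
  · exact ⟨hdeg ▸ PathLP.pathFromTo_ofExp a N d hle hN, hexp ▸ hsupp, fun v => by rw [hexp]⟩
  · rintro q ⟨hq, -, hqd⟩
    exact PathLP.eq_of_pathExp_eq (by rw [hq.1]; rfl) ((funext hqd).trans hexp.symm)

theorem pathsWithExp_ncard_eq (a b : ℕ) {V : Set Var} (hV : Sum.inl 0 ∉ V)
    (hV' : Sum.inr 0 ∉ V) (d : Var →₀ ℕ) :
    ((pathsWithExp a b V d).ncard : ℤ) = eVar V ((b : ℤ) - a) d := by
  rw [eVar]
  split_ifs with hd
  · obtain ⟨-, hle, hsupp, hdeg⟩ := hd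
    have hb : a + (d.sum fun _ m => m) = b := by omega
    obtain ⟨p, hp⟩ := exists_pathsWithExp_eq_singleton hV hV' hle hsupp hb
    rw [hp, Set.ncard_singleton, Nat.cast_one]
  · suffices pathsWithExp a b V d = ∅ by rw [this, Set.ncard_empty, Nat.cast_zero]
    refine Set.eq_empty_of_forall_notMem fun p ⟨hp, hsupp, hpd⟩ => hd ?_
    have hdeg := hp.add_degree_eq (funext hpd)
    exact ⟨by omega, fun v => hpd v ▸ p.pathExp_le_one v, fun v => hpd v ▸ hsupp v, by omega⟩

theorem LijSum_eq_eVar_general (lam mu : Partition) (n i j : ℕ) (hin : i ≤ n) (hjn : j ≤ n) :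
    LijSum lam mu n i j =
      eVar (xVars ∪ tRange (mu.conj i + 1) (lam.conj j - 1))
        ((lam.conj j : ℤ) - (mu.conj i : ℤ) - j + i) := by
  funext d
  have hpaths : {p ∈ Lij lam mu n i j | ∀ v, pathExp p v = d v} =
      pathsWithExp (mu.conj i + n - i) (lam.conj j + n - j)
        (xVars ∪ tRange (mu.conj i + 1) (lam.conj j - 1)) d := by
    ext p
    simp only [Lij, pathsWithExp, Set.mem_ofPred_eq, ← p.hi_flat_iff, and_assoc]
  have hdeg : ((lam.conj j + n - j : ℕ) : ℤ) - (mu.conj i + n - i : ℕ) =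
      (lam.conj j : ℤ) - mu.conj i - j + i := by
    omega
  rw [LijSum, hpaths,
    pathsWithExp_ncard_eq _ _ (by simp [xVars, tRange]) (by simp [xVars, tRange]), hdeg]

/-- **The generating function of `L(i,j)`:**
`∑_{p ∈ L(i,j)} wt(p) = e_{λ'_j - μ'_i - j + i}(x_1, x_2, …, t_{μ'_i+1}, …, t_{λ'_j-1})`. -/
theorem LijSum_eq_eVar (lam mu : Partition) (n i j : ℕ) (hsub : Partition.Sub mu lam)
    (hn : lam.part 1 ≤ n) (hi1 : 1 ≤ i) (hin : i ≤ n) (hj1 : 1 ≤ j) (hjn : j ≤ n) :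
    LijSum lam mu n i j =
      eVar (xVars ∪ tRange (mu.conj i + 1) (lam.conj j - 1))
        ((lam.conj j : ℤ) - (mu.conj i : ℤ) - j + i) :=
  LijSum_eq_eVar_general lam mu n i j hin hjn

end GrothJT
end

section
/- Let α = (α_1,…,α_n) and β = (β_1,…,β_n) be compositions with V(α) ⊆ V(β). The map Tab is a bijection from L(α,β) to VT(V(β)/V(α)). Moreover, if Tab(p) = T, then for every positive integer h the total number of diagonal steps in p ending at height h (resp. ω+h) equals the number of entries h (resp. h*) in T. -/
open scoped Classical

namespace GrothJT

/-! A path from `(a, 0)` is determined by `a` and the set of labels `h`, `h*` of its diagonal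
steps; every finite set of labels with `h ≥ 1` occurs, and the path then ends at `a` plus the
number of labels. `Tab` writes the label set of `p_i` in increasing order down column `i`,
below row `α_i`. So the columns of `Tab p` are strictly increasing of lengths `β_i - α_i`, and
conversely the entry sets of the columns of a vertical tableau are the label sets of the
unique `n`-path mapped to it. The weights agree because each label of `p_i` occupies exactly
one cell of column `i`. -/

section Rank

variable {α : Type*} [LinearOrder α] {S : Set α}

noncomputable def rank (S : Set α) (e : α) : ℕ := {e' ∈ S | e' ≤ e}.ncard

lemma rank_le_ncard (hS : S.Finite) (e : α) : rank S e ≤ S.ncard :=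
  Set.ncard_le_ncard (fun _ h => h.1) hS

lemma one_le_rank (hS : S.Finite) {e : α} (he : e ∈ S) : 1 ≤ rank S e :=
  (Set.ncard_pos (hS.subset fun _ h => h.1)).mpr ⟨e, he, le_rfl⟩

lemma rank_strictMonoOn (hS : S.Finite) : StrictMonoOn (rank S) S := by
  intro a _ b hb hab
  refine Set.ncard_lt_ncard ⟨fun x hx => ⟨hx.1, hx.2.trans hab.le⟩, fun h => ?_⟩
    (hS.subset fun _ h => h.1)
  exact (h ⟨hb, le_rfl⟩).2.not_gt hab

lemma rank_image (hS : S.Finite) : rank S '' S = Set.Icc 1 S.ncard := by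
  refine Set.eq_of_subset_of_ncard_le ?_ ?_ (Set.finite_Icc _ _)
  · rintro _ ⟨e, he, rfl⟩
    exact ⟨one_le_rank hS he, rank_le_ncard hS e⟩
  · rw [(rank_strictMonoOn hS).injOn.ncard_image, Set.ncard_Icc_nat]
    omega

lemma rank_image_Ioc {f : ℕ → α} {a b r : ℕ} (hf : StrictMonoOn f (Set.Ioc a b))
    (hr : r ∈ Set.Ioc a b) : rank (f '' Set.Ioc a b) (f r) = r - a := by
  have hlower : {e ∈ f '' Set.Ioc a b | e ≤ f r} = f '' Set.Ioc a r := by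
    ext e
    constructor
    · rintro ⟨⟨s, hs, rfl⟩, hle⟩
      exact ⟨s, ⟨hs.1, (hf.le_iff_le hs hr).mp hle⟩, rfl⟩
    · rintro ⟨s, hs, rfl⟩
      have hs' : s ∈ Set.Ioc a b := ⟨hs.1, hs.2.trans hr.2⟩
      exact ⟨⟨s, hs', rfl⟩, (hf.le_iff_le hs' hr).mpr hs.2⟩
  rw [rank, hlower, (hf.injOn.mono (Set.Ioc_subset_Ioc_right hr.2)).ncard_image,
    Set.ncard_Ioc_nat]

end Rank

section NthSmall

variable {S : Set Ext}

lemma nthSmall_eq_some_iff (hS : S.Finite) {k : ℕ} {e : Ext} :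
    nthSmall S k = some e ↔ e ∈ S ∧ rank S e = k := by
  unfold nthSmall
  split_ifs with h
  · rw [Option.some_inj]
    constructor
    · rintro rfl
      exact h.choose_spec
    · rintro ⟨he, hk⟩
      exact (rank_strictMonoOn hS).injOn h.choose_spec.1 he (h.choose_spec.2.trans hk.symm)
  · simp only [false_iff]
    exact fun hek => h ⟨e, hek⟩

lemma nthSmall_isSome_iff (hS : S.Finite) {k : ℕ} :
    (nthSmall S k).isSome ↔ 1 ≤ k ∧ k ≤ S.ncard := by
  rw [Option.isSome_iff_exists, ← Set.mem_Icc, ← rank_image hS]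
  simp only [nthSmall_eq_some_iff hS, Set.mem_image]

lemma nthSmall_image_Ioc {f : ℕ → Ext} {a b k : ℕ} (hf : StrictMonoOn f (Set.Ioc a b))
    (hk : 1 ≤ k) :
    nthSmall (f '' Set.Ioc a b) k = if a + k ≤ b then some (f (a + k)) else none := by
  have hS : (f '' Set.Ioc a b).Finite := (Set.finite_Ioc a b).image f
  split_ifs with hkb
  · have hr : a + k ∈ Set.Ioc a b := ⟨by omega, hkb⟩
    rw [nthSmall_eq_some_iff hS, rank_image_Ioc hf hr]
    exact ⟨Set.mem_image_of_mem f hr, by omega⟩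
  · refine Option.eq_none_iff_forall_ne_some.mpr fun e he => ?_
    obtain ⟨⟨r, hr, rfl⟩, hrank⟩ := (nthSmall_eq_some_iff hS).mp he
    rw [rank_image_Ioc hf hr] at hrank
    exact hkb (by have := hr.2; omega)

end NthSmall

section StepSequences

def stepSet (f : ℕ → ℕ) : Set ℕ := {m | 1 ≤ m ∧ f m = f (m - 1) + 1}

noncomputable def countIn (A : Set ℕ) (m : ℕ) : ℕ := ((Finset.Icc 1 m).filter (· ∈ A)).card

variable {A : Set ℕ} {f : ℕ → ℕ}

lemma countIn_zero (A : Set ℕ) : countIn A 0 = 0 := by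
  simp [countIn]

lemma countIn_succ (A : Set ℕ) (m : ℕ) :
    countIn A (m + 1) = countIn A m + if m + 1 ∈ A then 1 else 0 := by
  rw [countIn, countIn, ← Finset.insert_Icc_right_eq_Icc_add_one (by omega),
    Finset.filter_insert]
  split_ifs
  · exact Finset.card_insert_of_notMem (by simp)
  · rfl

lemma countIn_eq_of_le {N m : ℕ} (hA : ∀ x ∈ A, x ≤ N) (hm : N ≤ m) :
    countIn A m = countIn A N := by
  induction m, hm using Nat.le_induction with
  | base => rfl
  | succ m hm ih =>
    rw [countIn_succ, ih, if_neg fun h => by have := hA _ h; omega, add_zero]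

lemma countIn_eq_ncard {N : ℕ} (hA : A ⊆ Set.Icc 1 N) : countIn A N = A.ncard := by
  rw [countIn, ← Set.ncard_coe_finset, Finset.coe_filter]
  congr
  ext x
  exact ⟨fun h => h.2, fun hx => ⟨Finset.mem_Icc.mpr (hA hx), hx⟩⟩

lemma eq_add_countIn_stepSet (hf : ∀ m, f (m + 1) = f m ∨ f (m + 1) = f m + 1) (m : ℕ) :
    f m = f 0 + countIn (stepSet f) m := by
  induction m with
  | zero => simp [countIn_zero]
  | succ m ih =>
    have hstep : m + 1 ∈ stepSet f ↔ f (m + 1) = f m + 1 := by simp [stepSet]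
    rw [countIn_succ, ← add_assoc, ← ih]
    rcases hf m with h | h <;> simp [hstep, h]

lemma stepSet_subset_Icc {N : ℕ} (hN : ∀ m, N ≤ m → f m = f N) :
    stepSet f ⊆ Set.Icc 1 N := by
  rintro m ⟨h1, hm⟩
  refine ⟨h1, not_lt.mp fun hlt => ?_⟩
  have := hN m hlt.le
  have := hN (m - 1) (by omega)
  omega

lemma eq_add_ncard_stepSet (hf : ∀ m, f (m + 1) = f m ∨ f (m + 1) = f m + 1) {N : ℕ}
    (hN : ∀ m, N ≤ m → f m = f N) : f N = f 0 + (stepSet f).ncard := by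
  rw [eq_add_countIn_stepSet hf N, countIn_eq_ncard (stepSet_subset_Icc hN)]

lemma stepSet_add_countIn (a : ℕ) (hA : ∀ x ∈ A, 1 ≤ x) :
    stepSet (fun m => a + countIn A m) = A := by
  ext m
  simp only [stepSet, Set.mem_ofPred_eq]
  constructor
  · rintro ⟨h1, h⟩
    obtain ⟨k, rfl⟩ : ∃ k, m = k + 1 := ⟨m - 1, by omega⟩
    rw [countIn_succ, Nat.add_sub_cancel] at h
    split_ifs at h with hk
    · exact hk
    · omega
  · intro hm
    obtain ⟨k, rfl⟩ : ∃ k, m = k + 1 := ⟨m - 1, by have := hA m hm; omega⟩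
    rw [countIn_succ, Nat.add_sub_cancel, if_pos hm]
    exact ⟨by omega, rfl⟩

end StepSequences

section Paths

lemma pl_injective : Function.Injective pl := fun a b h => by simpa [pl] using h

lemma st_injective : Function.Injective st := fun a b h => by simpa [st] using h

lemma pl_ne_st (a b : ℕ) : pl a ≠ st b := by simp [pl, st]

lemma labelSet_eq (p : PathLP) : labelSet p = pl '' stepSet p.lo ∪ st '' stepSet p.hi := by
  ext e
  simp only [labelSet, stepSet, Set.mem_union, Set.mem_image, Set.mem_ofPred_eq]
  constructor
  · rintro ⟨m, hm, ⟨h, rfl⟩ | ⟨h, rfl⟩⟩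
    exacts [.inl ⟨m, ⟨hm, h⟩, rfl⟩, .inr ⟨m, ⟨hm, h⟩, rfl⟩]
  · rintro (⟨m, ⟨hm, h⟩, rfl⟩ | ⟨m, ⟨hm, h⟩, rfl⟩)
    exacts [⟨m, hm, .inl ⟨h, rfl⟩⟩, ⟨m, hm, .inr ⟨h, rfl⟩⟩]

lemma pl_mem_labelSet {p : PathLP} {m : ℕ} : pl m ∈ labelSet p ↔ m ∈ stepSet p.lo := by
  simp [labelSet_eq, pl_injective.eq_iff, fun a b => (pl_ne_st b a).symm]

lemma st_mem_labelSet {p : PathLP} {m : ℕ} : st m ∈ labelSet p ↔ m ∈ stepSet p.hi := by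
  simp [labelSet_eq, st_injective.eq_iff, pl_ne_st]

namespace PathLP

variable (p : PathLP)

lemma stepSet_lo_finite : (stepSet p.lo).Finite := by
  obtain ⟨N, hN⟩ := p.lo_eventually
  exact (Set.finite_Icc 1 N).subset (stepSet_subset_Icc hN)

lemma stepSet_hi_finite : (stepSet p.hi).Finite := by
  obtain ⟨N, hN⟩ := p.hi_eventually
  exact (Set.finite_Icc 1 N).subset (stepSet_subset_Icc hN)

lemma labelSet_finite : (labelSet p).Finite := by
  rw [labelSet_eq]
  exact (p.stepSet_lo_finite.image pl).union (p.stepSet_hi_finite.image st)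

lemma ncard_labelSet : (labelSet p).ncard = (stepSet p.lo).ncard + (stepSet p.hi).ncard := by
  have hdisj : Disjoint (pl '' stepSet p.lo) (st '' stepSet p.hi) := by
    rw [Set.disjoint_left]
    rintro _ ⟨a, _, rfl⟩ ⟨b, _, hb⟩
    exact pl_ne_st a b hb.symm
  rw [labelSet_eq, Set.ncard_union_eq hdisj (p.stepSet_lo_finite.image pl)
    (p.stepSet_hi_finite.image st), pl_injective.injOn.ncard_image,
    st_injective.injOn.ncard_image]

lemma hi_zero : p.hi 0 = p.lo 0 + (stepSet p.lo).ncard := by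
  obtain ⟨N, hN, hlink⟩ := p.link
  rw [hlink, eq_add_ncard_stepSet p.lo_step hN]

lemma pathFromTo_iff {a b : ℕ} :
    PathFromTo p a b ↔ p.lo 0 = a ∧ b = a + (labelSet p).ncard := by
  rw [PathFromTo, ncard_labelSet]
  constructor
  · rintro ⟨rfl, N, hN⟩
    have hconst : ∀ m, N ≤ m → p.hi m = p.hi N := fun m hm =>
      (hN m hm).trans (hN N le_rfl).symm
    refine ⟨rfl, ?_⟩
    rw [← hN N le_rfl, eq_add_ncard_stepSet p.hi_step hconst, hi_zero, add_assoc]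
  · rintro ⟨rfl, rfl⟩
    obtain ⟨N, hN⟩ := p.hi_eventually
    refine ⟨rfl, N, fun m hm => ?_⟩
    rw [hN m hm, eq_add_ncard_stepSet p.hi_step hN, hi_zero, add_assoc]

lemma ext_of_labelSet {p q : PathLP} (h0 : p.lo 0 = q.lo 0) (h : labelSet p = labelSet q) :
    p = q := by
  have hlo : stepSet p.lo = stepSet q.lo :=
    Set.ext fun m => by rw [← pl_mem_labelSet, ← pl_mem_labelSet, h]
  have hhi : stepSet p.hi = stepSet q.hi :=
    Set.ext fun m => by rw [← st_mem_labelSet, ← st_mem_labelSet, h]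
  have hhi0 : p.hi 0 = q.hi 0 := by rw [hi_zero, hi_zero, h0, hlo]
  have hlo' : p.lo = q.lo := funext fun m => by
    rw [eq_add_countIn_stepSet p.lo_step m, eq_add_countIn_stepSet q.lo_step m, h0, hlo]
  have hhi' : p.hi = q.hi := funext fun m => by
    rw [eq_add_countIn_stepSet p.hi_step m, eq_add_countIn_stepSet q.hi_step m, hhi0, hhi]
  obtain ⟨_, _, _, _, _, _, _⟩ := p
  obtain ⟨_, _, _, _, _, _, _⟩ := q
  subst hlo' hhi'
  rfl

noncomputable def ofSteps (a : ℕ) {A B : Set ℕ} (hA : BddAbove A) (hB : BddAbove B) :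
    PathLP where
  lo m := a + countIn A m
  hi m := a + countIn A (sSup A) + countIn B m
  lo_step m := by rw [countIn_succ]; split_ifs <;> omega
  hi_step m := by rw [countIn_succ]; split_ifs <;> omega
  lo_eventually := ⟨sSup A, fun m hm => by rw [countIn_eq_of_le (fun _ => le_csSup hA) hm]⟩
  hi_eventually := ⟨sSup B, fun m hm => by rw [countIn_eq_of_le (fun _ => le_csSup hB) hm]⟩
  link := ⟨sSup A, fun m hm => by rw [countIn_eq_of_le (fun _ => le_csSup hA) hm],
    by rw [countIn_zero, add_zero]⟩

lemma labelSet_ofSteps (a : ℕ) {A B : Set ℕ} (hA : BddAbove A) (hB : BddAbove B)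
    (hA₁ : ∀ x ∈ A, 1 ≤ x) (hB₁ : ∀ x ∈ B, 1 ≤ x) :
    labelSet (ofSteps a hA hB) = pl '' A ∪ st '' B := by
  rw [labelSet_eq]
  congr 2
  exacts [stepSet_add_countIn a hA₁, stepSet_add_countIn _ hB₁]

end PathLP

lemma exists_path_labelSet (a : ℕ) {L : Set Ext} (hL : L.Finite)
    (hpos : ∀ e ∈ L, ∃ m, 1 ≤ m ∧ (e = pl m ∨ e = st m)) :
    ∃ p : PathLP, p.lo 0 = a ∧ labelSet p = L := by
  have hA₁ : ∀ x ∈ pl ⁻¹' L, 1 ≤ x := fun x hx => by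
    obtain ⟨m, hm, h | h⟩ := hpos _ hx
    exacts [pl_injective h ▸ hm, absurd h (pl_ne_st x m)]
  have hB₁ : ∀ x ∈ st ⁻¹' L, 1 ≤ x := fun x hx => by
    obtain ⟨m, hm, h | h⟩ := hpos _ hx
    exacts [absurd h.symm (pl_ne_st m x), st_injective h ▸ hm]
  have hA := (hL.preimage pl_injective.injOn).bddAbove
  have hB := (hL.preimage st_injective.injOn).bddAbove
  refine ⟨PathLP.ofSteps a hA hB, by simp [PathLP.ofSteps, countIn_zero], ?_⟩
  rw [PathLP.labelSet_ofSteps a hA hB hA₁ hB₁]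
  ext e
  constructor
  · rintro (⟨m, hm, rfl⟩ | ⟨m, hm, rfl⟩) <;> exact hm
  · intro he
    obtain ⟨m, -, rfl | rfl⟩ := hpos e he
    exacts [.inl ⟨m, he, rfl⟩, .inr ⟨m, he, rfl⟩]

end Paths

section Tab

variable {alpha beta : ℕ → ℕ} {n : ℕ}

lemma TabU_apply (p : NPath n) (i : Fin n) {k : ℕ} (hk : 1 ≤ k) :
    TabU alpha n p (alpha (i.1 + 1) + k, i.1 + 1) = nthSmall (labelSet (p i)) k := by
  simp only [TabU, Nat.add_sub_cancel, Nat.add_sub_cancel_left, Fin.eta]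
  rw [dif_pos ⟨Nat.le_add_left 1 _, i.2, by omega⟩]

lemma TabU_eq_none (p : NPath n) {c : ℕ × ℕ}
    (hc : ¬ (1 ≤ c.2 ∧ c.2 ≤ n ∧ alpha c.2 < c.1)) :
    TabU alpha n p c = none :=
  dif_neg hc

lemma exists_eq_cell {c : ℕ × ℕ} (hc : 1 ≤ c.2 ∧ c.2 ≤ n ∧ alpha c.2 < c.1) :
    ∃ (i : Fin n) (k : ℕ), 1 ≤ k ∧ c = (alpha (i.1 + 1) + k, i.1 + 1) := by
  obtain ⟨r, j⟩ := c
  obtain ⟨h1, h2, h3⟩ : 1 ≤ j ∧ j ≤ n ∧ alpha j < r := hc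
  obtain ⟨i, rfl⟩ : ∃ i, j = i + 1 := ⟨j - 1, by omega⟩
  exact ⟨⟨i, by omega⟩, r - alpha (i + 1), by omega, Prod.ext (by dsimp only; omega) rfl⟩

lemma TabU_eq_some_iff {p : NPath n} {c : ℕ × ℕ} {e : Ext} :
    TabU alpha n p c = some e ↔
      ∃ i : Fin n, e ∈ labelSet (p i) ∧
        c = (alpha (i.1 + 1) + rank (labelSet (p i)) e, i.1 + 1) := by
  constructor
  · intro h
    by_cases hc : 1 ≤ c.2 ∧ c.2 ≤ n ∧ alpha c.2 < c.1
    · obtain ⟨i, k, hk, rfl⟩ := exists_eq_cell hc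
      rw [TabU_apply p i hk, nthSmall_eq_some_iff (p i).labelSet_finite] at h
      exact ⟨i, h.1, by rw [h.2]⟩
    · simp [TabU_eq_none p hc] at h
  · rintro ⟨i, he, rfl⟩
    rw [TabU_apply p i (one_le_rank (p i).labelSet_finite he),
      nthSmall_eq_some_iff (p i).labelSet_finite]
    exact ⟨he, rfl⟩

lemma labelSet_eq_setOf_TabU (alpha : ℕ → ℕ) (p : NPath n) (i : Fin n) :
    labelSet (p i) = {e | ∃ r, TabU alpha n p (r, i.1 + 1) = some e} := by
  ext e
  simp only [TabU_eq_some_iff, Prod.mk.injEq, Set.mem_ofPred_eq]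
  constructor
  · exact fun he => ⟨_, i, he, rfl, rfl⟩
  · rintro ⟨r, i', he, -, hi⟩
    rwa [Fin.ext (Nat.succ_injective hi)]

lemma ncard_labelSet_of_mem_Lab {p : NPath n} (hp : p ∈ Lab alpha beta n) (i : Fin n) :
    (labelSet (p i)).ncard = beta (i.1 + 1) - alpha (i.1 + 1) := by
  have := ((p i).pathFromTo_iff.mp (hp i)).2
  have := i.2
  omega

lemma TabU_isSome_iff {p : NPath n} (hp : p ∈ Lab alpha beta n) (c : ℕ × ℕ) :
    (TabU alpha n p c).isSome ↔ c ∈ VTcells alpha beta n := by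
  by_cases hc : 1 ≤ c.2 ∧ c.2 ≤ n ∧ alpha c.2 < c.1
  · obtain ⟨i, k, hk, rfl⟩ := exists_eq_cell hc
    rw [TabU_apply p i hk, nthSmall_isSome_iff (p i).labelSet_finite,
      ncard_labelSet_of_mem_Lab hp i]
    simp only [VTcells, Set.mem_ofPred_eq]
    have := i.2
    omega
  · simp only [TabU_eq_none p hc, Option.isSome_none, Bool.false_eq_true, false_iff]
    exact fun h => hc ⟨h.1, h.2.1, h.2.2.1⟩

lemma TabU_mapsTo :
    Set.MapsTo (TabU alpha n) (Lab alpha beta n) {T | IsVTsh (VTcells alpha beta n) T} := by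
  intro p hp
  refine ⟨TabU_isSome_iff hp, fun c e h => ?_, fun r j e₁ e₂ h₁ h₂ => ?_⟩
  · obtain ⟨i, ⟨m, hm, ⟨-, rfl⟩ | ⟨-, rfl⟩⟩, -⟩ := TabU_eq_some_iff.mp h
    exacts [⟨m, hm, .inl rfl⟩, ⟨m, hm, .inr rfl⟩]
  · obtain ⟨i₁, he₁, hc₁⟩ := TabU_eq_some_iff.mp h₁
    obtain ⟨i₂, he₂, hc₂⟩ := TabU_eq_some_iff.mp h₂
    simp only [Prod.mk.injEq] at hc₁ hc₂
    obtain rfl : i₁ = i₂ := Fin.ext (by omega)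
    exact ((rank_strictMonoOn (p i₁).labelSet_finite).lt_iff_lt he₁ he₂).mp (by omega)

lemma TabU_injOn : Set.InjOn (TabU alpha n) (Lab alpha beta n) := by
  intro p hp q hq h
  funext i
  refine PathLP.ext_of_labelSet ((hp i).1.trans (hq i).1.symm) ?_
  rw [labelSet_eq_setOf_TabU alpha p, labelSet_eq_setOf_TabU alpha q, h]

lemma IsVTsh.exists_strictMonoOn_column {T : Tb} (hT : IsVTsh (VTcells alpha beta n) T) {j : ℕ}
    (hj₁ : 1 ≤ j) (hjn : j ≤ n) :
    ∃ v : ℕ → Ext, StrictMonoOn v (Set.Ioc (alpha j) (beta j)) ∧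
      ∀ r, T (r, j) = if r ∈ Set.Ioc (alpha j) (beta j) then some (v r) else none := by
  have hsome : ∀ r, (T (r, j)).isSome ↔ r ∈ Set.Ioc (alpha j) (beta j) := fun r =>
    (hT.1 (r, j)).trans (by simp [VTcells, hj₁, hjn])
  have hget : ∀ r ∈ Set.Ioc (alpha j) (beta j), T (r, j) = some ((T (r, j)).getD (pl 0)) :=
    fun r hr => by obtain ⟨e, he⟩ := Option.isSome_iff_exists.mp ((hsome r).mpr hr); simp [he]
  refine ⟨fun r => (T (r, j)).getD (pl 0), ?_, fun r => ?_⟩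
  · refine strictMonoOn_of_lt_add_one Set.ordConnected_Ioc fun r _ hr hr₁ => ?_
    exact hT.2.2 r j _ _ (hget r hr) (hget (r + 1) hr₁)
  · split_ifs with hr
    · exact hget r hr
    · exact Option.not_isSome_iff_eq_none.mp (mt (hsome r).mp hr)

lemma TabU_surjOn (hsub : ∀ j, 1 ≤ j → j ≤ n → alpha j ≤ beta j) :
    Set.SurjOn (TabU alpha n) (Lab alpha beta n) {T | IsVTsh (VTcells alpha beta n) T} := by
  intro T hT
  choose v hv_mono hv using fun i : Fin n =>
    IsVTsh.exists_strictMonoOn_column hT (j := i.1 + 1) (by omega) i.2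
  have hpos : ∀ i : Fin n, ∀ e ∈ v i '' Set.Ioc (alpha (i.1 + 1)) (beta (i.1 + 1)),
      ∃ m, 1 ≤ m ∧ (e = pl m ∨ e = st m) := by
    rintro i _ ⟨r, hr, rfl⟩
    exact hT.2.1 _ _ (by rw [hv, if_pos hr])
  choose P hP₀ hP using fun i => exists_path_labelSet (alpha (i.1 + 1) + n - (i.1 + 1))
    ((Set.finite_Ioc _ _).image (v i)) (hpos i)
  refine ⟨P, fun i => (P i).pathFromTo_iff.mpr ⟨hP₀ i, ?_⟩, ?_⟩
  · rw [hP i, (hv_mono i).injOn.ncard_image, Set.ncard_Ioc_nat]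
    have := hsub (i.1 + 1) (by omega) i.2
    have := i.2
    omega
  · funext c
    by_cases hc : 1 ≤ c.2 ∧ c.2 ≤ n ∧ alpha c.2 < c.1
    · obtain ⟨i, k, hk, rfl⟩ := exists_eq_cell hc
      rw [TabU_apply P i hk, hP i, nthSmall_image_Ioc (hv_mono i) hk, hv i]
      simp only [Set.mem_Ioc, lt_add_iff_pos_right, show 0 < k from hk, true_and]
    · rw [TabU_eq_none P hc, eq_comm, ← Option.not_isSome_iff_eq_none, hT.1]
      exact fun h => hc ⟨h.1, h.2.1, h.2.2.1⟩

lemma ncard_TabU_eq_some (p : NPath n) (e : Ext) :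
    {c | TabU alpha n p c = some e}.ncard =
      ∑ i : Fin n, if e ∈ labelSet (p i) then 1 else 0 := by
  have hcells : {c | TabU alpha n p c = some e} =
      (fun i : Fin n => (alpha (i.1 + 1) + rank (labelSet (p i)) e, i.1 + 1)) ''
        {i | e ∈ labelSet (p i)} := by
    ext c
    simp only [Set.mem_ofPred_eq, TabU_eq_some_iff, Set.mem_image]
    exact exists_congr fun i => and_congr_right fun _ => eq_comm
  have hinj : Function.Injective
      fun i : Fin n => (alpha (i.1 + 1) + rank (labelSet (p i)) e, i.1 + 1) :=
    fun i j h => Fin.ext (by simpa using congrArg Prod.snd h)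
  rw [hcells, Set.ncard_image_of_injective _ hinj, ← Finset.coe_filter_univ, Set.ncard_coe_finset,
    Finset.card_filter]

end Tab

/-- **Proposition: `Tab` is a bijection from `L(α,β)` to `VT(V(β)/V(α))`.**
Moreover, if `Tab(p) = T`, then for every `h ≥ 1` the total number of diagonal steps of `p`
ending at height `h` (resp. `ω + h`) equals the number of entries `h` (resp. `h*`) in `T`. -/
theorem tab_bijOn_verticalTableaux (alpha beta : ℕ → ℕ) (n : ℕ)
    (hsub : ∀ j, 1 ≤ j → j ≤ n → alpha j ≤ beta j) :
    Set.BijOn (TabU alpha n) (Lab alpha beta n) {T | IsVTsh (VTcells alpha beta n) T} ∧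
    ∀ p ∈ Lab alpha beta n, ∀ h, 1 ≤ h →
      ((∑ i : Fin n, if (p i).lo h = (p i).lo (h - 1) + 1 then 1 else 0) =
          Set.ncard {c : ℕ × ℕ | TabU alpha n p c = some (pl h)} ∧
        (∑ i : Fin n, if (p i).hi h = (p i).hi (h - 1) + 1 then 1 else 0) =
          Set.ncard {c : ℕ × ℕ | TabU alpha n p c = some (st h)}) := by
  refine ⟨⟨TabU_mapsTo, TabU_injOn, TabU_surjOn hsub⟩, fun p _ h hh => ⟨?_, ?_⟩⟩
  · simp only [ncard_TabU_eq_some, pl_mem_labelSet, stepSet, Set.mem_ofPred_eq, hh, true_and]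
  · simp only [ncard_TabU_eq_some, st_mem_labelSet, stepSet, Set.mem_ofPred_eq, hh, true_and]

end GrothJT
end
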